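/- If W̃ ⊆ H ⊕ H is a maximally isotropic closed subspace for the form Σ̃((φ₊,φ₋),(ψ₊,ψ₋)) = −i(⟨φ₊,ψ₊⟩ − ⟨φ₋,ψ₋⟩), then W̃ ∩ ({0} × H) = {0}, i.e., if (0, ψ₋) ∈ W̃ then ψ₋ = 0. -/

import Mathlib

/-- The form `Σ̃((φ₊,φ₋),(ψ₊,ψ₋)) = −i(⟨φ₊,ψ₊⟩ − ⟨φ₋,ψ₋⟩)` on `H ⊕ H`. -/
noncomputable def lagrangeFormTilde {H : Type*} [NormedAddCommGroup H] [InnerProductSpace ℂ H]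
    (x y : H × H) : ℂ :=
  -Complex.I * ((inner ℂ x.1 y.1 : ℂ) - inner ℂ x.2 y.2)

section LagrangeFormTilde

variable {H : Type*} [NormedAddCommGroup H] [InnerProductSpace ℂ H]

theorem lagrangeFormTilde_self (x : H × H) :
    lagrangeFormTilde x x = Complex.I * ((‖x.2‖ ^ 2 - ‖x.1‖ ^ 2 : ℝ) : ℂ) := by
  simp only [lagrangeFormTilde, inner_self_eq_norm_sq_to_K, RCLike.ofReal_eq_complex_ofReal,
    Complex.ofReal_sub, Complex.ofReal_pow]
  ring

theorem norm_fst_eq_norm_snd_of_lagrangeFormTilde_self_eq_zero {x : H × H}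
    (hx : lagrangeFormTilde x x = 0) : ‖x.1‖ = ‖x.2‖ := by
  rw [lagrangeFormTilde_self, mul_eq_zero, Complex.ofReal_eq_zero, sub_eq_zero] at hx
  rcases hx with hI | hsq
  · exact absurd hI Complex.I_ne_zero
  · exact ((pow_left_inj₀ (norm_nonneg _) (norm_nonneg _) two_ne_zero).mp hsq).symm

end LagrangeFormTilde

theorem maximal_isotropic_inter_zero_general {H : Type*} [NormedAddCommGroup H]
    [InnerProductSpace ℂ H] (W : Submodule ℂ (H × H))
    (hiso : ∀ x ∈ W, ∀ y ∈ W, lagrangeFormTilde x y = 0) :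
    ∀ ψ : H, ((0 : H), ψ) ∈ W → ψ = 0 := by
  intro ψ hψ
  have hnorm := norm_fst_eq_norm_snd_of_lagrangeFormTilde_self_eq_zero (hiso _ hψ _ hψ)
  rwa [norm_zero, eq_comm, norm_eq_zero] at hnorm

/-- If `W̃ ⊆ H ⊕ H` is a maximally isotropic closed subspace for `Σ̃`, then
`W̃ ∩ ({0} × H) = {0}`: if `(0, ψ₋) ∈ W̃` then `ψ₋ = 0`. -/
theorem maximal_isotropic_inter_zero {H : Type*} [NormedAddCommGroup H]
    [InnerProductSpace ℂ H] [CompleteSpace H] (W : Submodule ℂ (H × H))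
    (hclosed : IsClosed (W : Set (H × H)))
    (hiso : ∀ x ∈ W, ∀ y ∈ W, lagrangeFormTilde x y = 0)
    (hmax : ∀ W' : Submodule ℂ (H × H), IsClosed (W' : Set (H × H)) →
      (∀ x ∈ W', ∀ y ∈ W', lagrangeFormTilde x y = 0) → W ≤ W' → W' = W) :
    ∀ ψ : H, ((0 : H), ψ) ∈ W → ψ = 0 :=
  maximal_isotropic_inter_zero_general W hiso
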